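/- arXiv:1905.13476 — 7 statements merged into one kernel-verified Lean document; each statement's English description precedes it below -/
import Mathlib

section
/- Let A and B be real symmetric positive semidefinite n×n matrices. Then det(I + A) ≤ det(I + B) · exp( tr( (A − B)(I + B)⁻¹ ) ). -/
open Matrix

namespace Matrix

variable {ι : Type*} [Fintype ι] [DecidableEq ι]

/-- Eigenvalue-wise this is `λ ≤ exp (λ - 1)`. -/
theorem PosSemidef.det_le_exp_trace_sub_card {M : Matrix ι ι ℝ} (hM : M.PosSemidef) :
    M.det ≤ Real.exp (M.trace - Fintype.card ι) := by
  rw [hM.1.det_eq_prod_eigenvalues, hM.1.trace_eq_sum_eigenvalues]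
  calc ∏ i, (hM.1.eigenvalues i : ℝ) ≤ ∏ i, Real.exp (hM.1.eigenvalues i - 1) :=
        Finset.prod_le_prod (fun i _ => hM.eigenvalues_nonneg i)
          fun i _ => by linarith [Real.add_one_le_exp (hM.1.eigenvalues i - 1)]
    _ = Real.exp (∑ i, (hM.1.eigenvalues i : ℝ) - Fintype.card ι) := by
        simp [← Real.exp_sum, Finset.sum_sub_distrib]

/-- Apply the previous bound to `S * M * S` with `S = √(C⁻¹)`. -/
theorem PosSemidef.det_le_det_mul_exp_trace_mul_inv_sub_card {M C : Matrix ι ι ℝ}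
    (hM : M.PosSemidef) (hC : C.PosDef) :
    M.det ≤ C.det * Real.exp ((M * C⁻¹).trace - Fintype.card ι) := by
  open MatrixOrder in
  obtain ⟨S, hS, hSS⟩ : ∃ S : Matrix ι ι ℝ, S.IsHermitian ∧ S * S = C⁻¹ :=
    ⟨CFC.sqrt C⁻¹, (CFC.sqrt_nonneg C⁻¹).posSemidef.1,
      CFC.sqrt_mul_sqrt_self C⁻¹ hC.inv.posSemidef.nonneg⟩
  have hSMS : (S * M * S).PosSemidef := by
    simpa only [hS.eq] using hM.mul_mul_conjTranspose_same S
  have hdet : (S * M * S).det = M.det / C.det := by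
    rw [det_mul, det_mul, mul_right_comm, ← det_mul, hSS, det_nonsing_inv,
      Ring.inverse_eq_inv', div_eq_inv_mul]
  have htrace : (S * M * S).trace = (M * C⁻¹).trace := by
    rw [trace_mul_cycle, hSS, trace_mul_comm]
  have hbound := hSMS.det_le_exp_trace_sub_card
  rwa [hdet, htrace, div_le_iff₀' hC.det_pos] at hbound

end Matrix

/-- For real symmetric psd matrices `A` and `B`,
`det (1 + A) ≤ det (1 + B) * exp (tr ((A - B) * (1 + B)⁻¹))`. -/
theorem det_one_add_le_det_mul_exp_trace {n : ℕ} (A B : Matrix (Fin n) (Fin n) ℝ)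
    (hA : A.PosSemidef) (hB : B.PosSemidef) :
    (1 + A).det ≤ (1 + B).det * Real.exp (((A - B) * (1 + B)⁻¹).trace) := by
  have hC : (1 + B).PosDef := PosDef.one.add_posSemidef hB
  have htrace : ((A - B) * (1 + B)⁻¹).trace = ((1 + A) * (1 + B)⁻¹).trace - n := by
    rw [show A - B = (1 + A) - (1 + B) by abel, sub_mul, mul_nonsing_inv _ hC.det_pos.ne'.isUnit,
      trace_sub, trace_one, Fintype.card_fin]
  rw [htrace]
  simpa only [Fintype.card_fin] using (PosSemidef.one.add hA).det_le_det_mul_exp_trace_mul_inv_sub_card hC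
end

section
/- Let L = B Bᵀ be a real positive semidefinite n×n matrix and let L̂ = B P Bᵀ where P is a real symmetric idempotent matrix. Then det(I + L) / det(I + L̂) ≥ exp( tr(L(I + L)⁻¹) − tr(L̂) + tr( L̂ (I + L)⁻¹ L̂ ) ). -/
/-!
Put `M = 1 + L`, `N = 1 + L̂` and factor `M⁻¹ = Rᵀ R`. The scalar bound `x ≤ exp (x - 1)` on the
eigenvalues of `R N Rᵀ` gives `det M / det N ≥ exp (tr (M⁻¹ (L - L̂)))`, so it suffices that
`tr (L̂ M⁻¹) + tr (L̂ M⁻¹ L̂) ≤ tr L̂`. Pushing `M⁻¹` through `B` turns this into the `r × r`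
inequality `tr P ≤ tr (P A⁻¹ P A)` for `A = 1 + Bᵀ B`, which is `tr (X X) ≤ tr (X Xᵀ)` for the
idempotent `X = S P S⁻¹`, where `A = Sᵀ S`.
-/

open Matrix

namespace Matrix

variable {m k : Type*} [Fintype m] [Fintype k]

theorem inv_one_add_mul_mul {R : Type*} [CommRing R] [DecidableEq m] [DecidableEq k]
    (B : Matrix m k R) (C : Matrix k m R)
    (h : IsUnit (1 + B * C).det) : (1 + B * C)⁻¹ * B = B * (1 + C * B)⁻¹ := by
  have h' : IsUnit (1 + C * B).det := by rwa [← det_one_add_mul_comm]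
  calc (1 + B * C)⁻¹ * B = (1 + B * C)⁻¹ * (B * (1 + C * B)) * (1 + C * B)⁻¹ := by
        rw [Matrix.mul_assoc, Matrix.mul_assoc, mul_nonsing_inv _ h', Matrix.mul_one]
    _ = (1 + B * C)⁻¹ * ((1 + B * C) * B) * (1 + C * B)⁻¹ := by
        simp only [Matrix.mul_add, Matrix.add_mul, Matrix.mul_one, Matrix.one_mul,
          Matrix.mul_assoc]
    _ = B * (1 + C * B)⁻¹ := by rw [nonsing_inv_mul_cancel_left _ _ h]

open scoped MatrixOrder in
theorem PosSemidef.exists_eq_transpose_mul_self [DecidableEq m] {A : Matrix m m ℝ}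
    (hA : A.PosSemidef) :
    ∃ R : Matrix m m ℝ, A = Rᵀ * R := by
  obtain ⟨R, hR⟩ := CStarAlgebra.nonneg_iff_eq_star_mul_self.mp hA.nonneg
  exact ⟨R, by rwa [star_eq_conjTranspose, conjTranspose_eq_transpose_of_trivial] at hR⟩

theorem posSemidef_mul_transpose_self (B : Matrix m k ℝ) : (B * Bᵀ).PosSemidef := by
  simpa using posSemidef_self_mul_conjTranspose B

theorem PosSemidef.det_le_exp_trace_sub_card_s3 [DecidableEq m] {A : Matrix m m ℝ}
    (hA : A.PosSemidef) : A.det ≤ Real.exp (A.trace - Fintype.card m) := by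
  rw [hA.1.det_eq_prod_eigenvalues, hA.1.trace_eq_sum_eigenvalues]
  calc ∏ i, (hA.1.eigenvalues i : ℝ) ≤ ∏ i, Real.exp (hA.1.eigenvalues i - 1) :=
        Finset.prod_le_prod (fun i _ ↦ hA.eigenvalues_nonneg i)
          fun i _ ↦ by linarith [Real.add_one_le_exp (hA.1.eigenvalues i - 1)]
    _ = Real.exp (∑ i, (hA.1.eigenvalues i : ℝ) - Fintype.card m) := by
        rw [← Real.exp_sum, Finset.sum_sub_distrib]; simp

theorem PosDef.exp_trace_inv_mul_sub_le_det_div [DecidableEq m] {M N : Matrix m m ℝ}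
    (hM : M.PosDef) (hN : N.PosDef) :
    Real.exp (M⁻¹ * (M - N)).trace ≤ M.det / N.det := by
  obtain ⟨R, hR⟩ := hM.inv.posSemidef.exists_eq_transpose_mul_self
  have hY : (R * N * Rᵀ).PosSemidef := by
    simpa using hN.posSemidef.mul_mul_conjTranspose_same R
  have hRdet : R.det * R.det = M.det⁻¹ := by
    rw [← Ring.inverse_eq_inv', ← det_nonsing_inv, hR, det_mul, det_transpose]
  have hdet : (R * N * Rᵀ).det = N.det / M.det := by
    rw [det_mul, det_mul, det_transpose, div_eq_mul_inv, ← hRdet]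
    ring
  have htr : (M⁻¹ * (M - N)).trace = -((R * N * Rᵀ).trace - Fintype.card m) := by
    rw [Matrix.mul_sub, nonsing_inv_mul _ hM.det_pos.ne'.isUnit, trace_sub, trace_one,
      trace_mul_cycle, ← hR]
    ring
  have hYpos : 0 < (R * N * Rᵀ).det := by rw [hdet]; exact div_pos hN.det_pos hM.det_pos
  rw [htr, Real.exp_neg, ← inv_div, ← hdet]
  exact inv_anti₀ hYpos hY.det_le_exp_trace_sub_card_s3

theorem trace_mul_self_le_trace_mul_transpose (X : Matrix m m ℝ) :
    (X * X).trace ≤ (X * Xᵀ).trace := by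
  have h := (posSemidef_mul_transpose_self (X - Xᵀ)).trace_nonneg
  have hXX : (Xᵀ * Xᵀ).trace = (X * X).trace := by rw [← transpose_mul, trace_transpose]
  have hXXt : (Xᵀ * X).trace = (X * Xᵀ).trace := trace_mul_comm _ _
  rw [transpose_sub, transpose_transpose, Matrix.sub_mul, Matrix.mul_sub, Matrix.mul_sub,
    trace_sub, trace_sub, trace_sub, hXX, hXXt] at h
  linarith

theorem trace_le_trace_mul_inv_mul_mul [DecidableEq m] {A P : Matrix m m ℝ} (hA : A.PosDef)
    (hPsym : Pᵀ = P) (hPidem : P * P = P) : P.trace ≤ (P * A⁻¹ * P * A).trace := by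
  obtain ⟨R, hR⟩ := hA.posSemidef.exists_eq_transpose_mul_self
  have hRdet : IsUnit R.det := by
    refine isUnit_iff_ne_zero.2 fun h0 ↦ hA.det_pos.ne' ?_
    rw [hR, det_mul, h0, mul_zero]
  have hRR : R⁻¹ * R = 1 := nonsing_inv_mul R hRdet
  have hAinv : A⁻¹ = R⁻¹ * R⁻¹ᵀ := by rw [hR, mul_inv_rev, transpose_nonsing_inv]
  set X := R * P * R⁻¹
  have hXX : (X * X).trace = P.trace := by
    rw [show X * X = R * (P * (R⁻¹ * R) * P) * R⁻¹ by simp only [X, Matrix.mul_assoc], hRR,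
      Matrix.mul_one, hPidem, trace_mul_cycle, hRR, Matrix.one_mul]
  have hXXt : (X * Xᵀ).trace = (P * A⁻¹ * P * A).trace := by
    have : X * Xᵀ = R * (P * A⁻¹ * P) * Rᵀ := by
      simp only [X, transpose_mul, hPsym, hAinv, transpose_nonsing_inv, Matrix.mul_assoc]
    rw [this, trace_mul_cycle, ← hR, trace_mul_comm]
  calc P.trace = (X * X).trace := hXX.symm
    _ ≤ (X * Xᵀ).trace := trace_mul_self_le_trace_mul_transpose X
    _ = (P * A⁻¹ * P * A).trace := hXXt

theorem trace_nystrom_le [DecidableEq m] [DecidableEq k] (B : Matrix m k ℝ) {P : Matrix k k ℝ}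
    (hPsym : Pᵀ = P) (hPidem : P * P = P) :
    (B * P * Bᵀ * (1 + B * Bᵀ)⁻¹).trace + (B * P * Bᵀ * (1 + B * Bᵀ)⁻¹ * (B * P * Bᵀ)).trace
      ≤ (B * P * Bᵀ).trace := by
  have hM : (1 + B * Bᵀ).PosDef := PosDef.one.add_posSemidef (posSemidef_mul_transpose_self B)
  have hpush := inv_one_add_mul_mul B Bᵀ hM.det_pos.ne'.isUnit
  have hA : (1 + Bᵀ * B).PosDef :=
    PosDef.one.add_posSemidef (by simpa using posSemidef_mul_transpose_self Bᵀ)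
  have hG : Bᵀ * B = 1 + Bᵀ * B - 1 := (add_sub_cancel_left 1 _).symm
  generalize 1 + Bᵀ * B = A at hpush hA hG
  have hBMB : Bᵀ * (1 + B * Bᵀ)⁻¹ * B = 1 - A⁻¹ := by
    rw [Matrix.mul_assoc, hpush, ← Matrix.mul_assoc, hG, Matrix.sub_mul,
      mul_nonsing_inv _ hA.det_pos.ne'.isUnit, Matrix.one_mul]
  have htr_hat : (B * P * Bᵀ).trace = (P * (A - 1)).trace := by
    rw [trace_mul_cycle, trace_mul_comm, hG]
  have htr_hat_mul : (B * P * Bᵀ * (1 + B * Bᵀ)⁻¹).trace = (P * (1 - A⁻¹)).trace := by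
    rw [← hBMB]
    simp only [Matrix.mul_assoc]
    rw [trace_mul_comm B]
    simp only [Matrix.mul_assoc]
  have htr_hat_mul_hat : (B * P * Bᵀ * (1 + B * Bᵀ)⁻¹ * (B * P * Bᵀ)).trace
      = (P * (1 - A⁻¹) * P * (A - 1)).trace := by
    rw [← hBMB, ← hG]
    simp only [Matrix.mul_assoc]
    rw [trace_mul_comm B]
    simp only [Matrix.mul_assoc]
  have hPAP : (P * A⁻¹ * P).trace = (P * A⁻¹).trace := by rw [trace_mul_cycle, hPidem]
  have hproj := trace_le_trace_mul_inv_mul_mul hA hPsym hPidem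
  rw [htr_hat, htr_hat_mul, htr_hat_mul_hat]
  simp only [Matrix.mul_sub, Matrix.sub_mul, Matrix.mul_one, trace_sub, hPidem,
    hPAP] at hproj ⊢
  linarith

end Matrix

/-- For `L = B * Bᵀ` and `L̂ = B * P * Bᵀ` with `P` symmetric idempotent,
`det (1 + L) / det (1 + L̂) ≥ exp (tr (L (1 + L)⁻¹) - tr L̂ + tr (L̂ (1 + L)⁻¹ L̂))`. -/
theorem det_ratio_ge_exp {n r : ℕ} (B : Matrix (Fin n) (Fin r) ℝ)
    (P : Matrix (Fin r) (Fin r) ℝ) (hPsym : Pᵀ = P) (hPidem : P * P = P)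
    (L Lhat : Matrix (Fin n) (Fin n) ℝ) (hL : L = B * Bᵀ) (hLhat : Lhat = B * P * Bᵀ) :
    Real.exp ((L * (1 + L)⁻¹).trace - Lhat.trace + (Lhat * (1 + L)⁻¹ * Lhat).trace)
      ≤ (1 + L).det / (1 + Lhat).det := by
  have hP : P.PosSemidef := by simpa [hPsym, hPidem] using posSemidef_mul_transpose_self P
  have hLhat_psd : Lhat.PosSemidef := by
    simpa [hLhat] using hP.mul_mul_conjTranspose_same B
  have hM : (1 + L).PosDef := PosDef.one.add_posSemidef (hL ▸ posSemidef_mul_transpose_self B)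
  have hN : (1 + Lhat).PosDef := PosDef.one.add_posSemidef hLhat_psd
  have hnystrom := trace_nystrom_le B hPsym hPidem
  rw [← hL, ← hLhat] at hnystrom
  refine (Real.exp_le_exp.mpr ?_).trans (hM.exp_trace_inv_mul_sub_le_det_div hN)
  rw [add_sub_add_left_eq_sub, Matrix.mul_sub, trace_sub, trace_mul_comm (1 + L)⁻¹ L,
    trace_mul_comm (1 + L)⁻¹ Lhat]
  linarith
end

section
/- Let B be a real n×r matrix, let P be a real symmetric idempotent r×r matrix, and set L = B Bᵀ and L̂ = B P Bᵀ. Then B (I_r + P BᵀB P)⁻¹ Bᵀ = L − L̂ + L̂ (I_n + L̂)⁻¹, which also equals L − L̂ (I_n + L̂)⁻¹ L̂. -/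
open Matrix

/-! With `A = B P` we have `P BᵀB P = AᵀA` and `L̂ = AAᵀ`. Since `AᵀA` vanishes on the range of
`1 - P`, the inverse `(1 + AᵀA)⁻¹` fixes `1 - P`, and on the range of `P` it is converted into
`(1 + L̂)⁻¹` by the push-through identity `(1 + AᵀA)⁻¹ Aᵀ = Aᵀ (1 + AAᵀ)⁻¹`. -/

namespace Matrix

variable {m k R : Type*} [Fintype m] [Fintype k] [DecidableEq m] [DecidableEq k] [CommRing R]

theorem mul_inv_one_add_mul_comm (A : Matrix m k R) (B : Matrix k m R) :
    A * (1 + B * A)⁻¹ = (1 + A * B)⁻¹ * A := by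
  by_cases h : IsUnit (1 + B * A).det
  · have h' : IsUnit (1 + A * B).det := by rwa [det_one_add_mul_comm]
    have hcomm : (1 + A * B) * A = A * (1 + B * A) := by
      simp only [Matrix.add_mul, Matrix.mul_add, Matrix.one_mul, Matrix.mul_one, Matrix.mul_assoc]
    calc A * (1 + B * A)⁻¹ = (1 + A * B)⁻¹ * ((1 + A * B) * A) * (1 + B * A)⁻¹ := by
          rw [nonsing_inv_mul_cancel_left _ _ h']
      _ = (1 + A * B)⁻¹ * A := by
          rw [hcomm, ← Matrix.mul_assoc, mul_nonsing_inv_cancel_right _ _ h]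
  · -- By Weinstein–Aronszajn both inverses are the junk value `0` together.
    have h' : ¬IsUnit (1 + A * B).det := by rwa [det_one_add_mul_comm]
    rw [nonsing_inv_apply_not_isUnit _ h, nonsing_inv_apply_not_isUnit _ h', Matrix.mul_zero,
      Matrix.zero_mul]

theorem inv_one_add_mul_one_sub_of_mul_eq {M P : Matrix m m R} (hMP : M * P = M)
    (hM : IsUnit (1 + M).det) : (1 + M)⁻¹ * (1 - P) = 1 - P := by
  have hfix : (1 + M) * (1 - P) = 1 - P := by
    rw [Matrix.add_mul, Matrix.one_mul, Matrix.mul_sub, Matrix.mul_one, hMP, sub_self, add_zero]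
  calc (1 + M)⁻¹ * (1 - P) = (1 + M)⁻¹ * ((1 + M) * (1 - P)) := by rw [hfix]
    _ = 1 - P := nonsing_inv_mul_cancel_left _ _ hM

theorem mul_inv_one_add_mul_self_eq_sub {X : Matrix m m R} (hX : IsUnit (1 + X).det) :
    X * (1 + X)⁻¹ * X = X - X * (1 + X)⁻¹ := by
  calc X * (1 + X)⁻¹ * X = X * (1 + X)⁻¹ * (1 + X) - X * (1 + X)⁻¹ := by
        rw [Matrix.mul_add, Matrix.mul_one, add_sub_cancel_left]
    _ = X - X * (1 + X)⁻¹ := by rw [nonsing_inv_mul_cancel_right _ _ hX]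

omit [DecidableEq m] in
theorem isUnit_det_one_add_transpose_mul_self (A : Matrix m k ℝ) : IsUnit (1 + Aᵀ * A).det := by
  have hpsd : (Aᵀ * A).PosSemidef := by
    simpa only [conjTranspose_eq_transpose_of_trivial] using posSemidef_conjTranspose_mul_self A
  exact (isUnit_iff_isUnit_det _).1 (PosDef.one.add_posSemidef hpsd).isUnit

end Matrix

/-- For `L = B * Bᵀ`, `L̂ = B * P * Bᵀ` with `P` symmetric idempotent,
`B (1 + P BᵀB P)⁻¹ Bᵀ = L - L̂ + L̂ (1 + L̂)⁻¹ = L - L̂ (1 + L̂)⁻¹ L̂`. -/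
theorem leverage_score_matrix_identity {n r : ℕ} (B : Matrix (Fin n) (Fin r) ℝ)
    (P : Matrix (Fin r) (Fin r) ℝ) (hPsym : Pᵀ = P) (hPidem : P * P = P)
    (L Lhat : Matrix (Fin n) (Fin n) ℝ) (hL : L = B * Bᵀ) (hLhat : Lhat = B * P * Bᵀ) :
    B * (1 + P * Bᵀ * B * P)⁻¹ * Bᵀ = L - Lhat + Lhat * (1 + Lhat)⁻¹
    ∧ B * (1 + P * Bᵀ * B * P)⁻¹ * Bᵀ = L - Lhat * (1 + Lhat)⁻¹ * Lhat := by
  obtain ⟨A, hA⟩ : ∃ A, A = B * P := ⟨_, rfl⟩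
  have hAt : Aᵀ = P * Bᵀ := by rw [hA, transpose_mul, hPsym]
  have hM : P * Bᵀ * B * P = Aᵀ * A := by rw [hAt, hA]; simp only [Matrix.mul_assoc]
  have hLhatA : Lhat = A * Aᵀ := by
    rw [hLhat, hAt, hA, Matrix.mul_assoc B P (P * Bᵀ), ← Matrix.mul_assoc P P, hPidem,
      Matrix.mul_assoc]
  have hMP : Aᵀ * A * P = Aᵀ * A := by rw [hA, Matrix.mul_assoc, Matrix.mul_assoc, hPidem]
  have hLhat_unit : IsUnit (1 + Lhat).det := by
    simpa only [hLhatA, transpose_transpose] using isUnit_det_one_add_transpose_mul_self Aᵀ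
  have hkernel := inv_one_add_mul_one_sub_of_mul_eq hMP (isUnit_det_one_add_transpose_mul_self A)
  have hpush : (1 + Aᵀ * A)⁻¹ * Aᵀ = Aᵀ * (1 + Lhat)⁻¹ := by
    rw [hLhatA, mul_inv_one_add_mul_comm]
  have hfirst : B * (1 + Aᵀ * A)⁻¹ * Bᵀ = L - Lhat + Lhat * (1 + Lhat)⁻¹ :=
    calc B * (1 + Aᵀ * A)⁻¹ * Bᵀ
        = B * ((1 + Aᵀ * A)⁻¹ * (1 - P)) * Bᵀ + B * ((1 + Aᵀ * A)⁻¹ * Aᵀ) := by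
          rw [hAt, Matrix.mul_sub, Matrix.mul_one]
          simp only [Matrix.mul_assoc, Matrix.mul_sub, Matrix.sub_mul]
          abel
      _ = L - Lhat + Lhat * (1 + Lhat)⁻¹ := by
          rw [hkernel, hpush, hL, hLhat, ← Matrix.mul_assoc B Aᵀ, hAt]
          simp only [Matrix.mul_assoc, Matrix.mul_sub, Matrix.sub_mul, Matrix.mul_one]
  rw [hM, hfirst, mul_inv_one_add_mul_self_eq_sub hLhat_unit]
  exact ⟨rfl, by abel⟩
end

section
/- Let L be a real psd n×n matrix, let p = (p₁,…,p_n) be a probability vector with all p_i > 0, and let r > 0. Define the n×n matrix à by Ã_{ij} = L_{ij} / ( r √(p_i p_j) ), and for a sequence σ ∈ {1,…,n}^t let Ã_σ denote the t×t matrix with entries (Ã_σ)_{ab} = Ã_{σ_a σ_b}. Then Σ_{t=0}^∞ ( e^{−r} r^t / t! ) · Σ_{σ ∈ {1,…,n}^t} ( Π_{a=1}^t p_{σ_a} ) · det(I_t + Ã_σ) = det(I_n + L). Equivalently, if t ∼ Poisson(r) and σ₁,…,σ_t are drawn i.i.d. from p, then E[ det(I + Ã_σ) ] = det(I + L). -/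
/-!
Expand `det (1 + Ã_σ)` as the sum of the principal minors of `Ã_σ`. In the minor indexed by
`s ⊆ {1, …, t}`, the coordinates of `σ` outside `s` integrate out because `∑ p = 1`. After the
weights `∏ p_{σ_a}` are absorbed, `Ã` becomes `L / r`. A `k`-tuple of distinct indices hits
each `k`-subset of `{1, …, n}` exactly `k!` times, and tuples with repeats give zero minors.
So the `t`-th inner sum is `∑_k t (t - 1) ⋯ (t - k + 1) r⁻ᵏ e_k`, where `e_k` is the sum of the
`k × k` principal minors of `L`. The `k`-th factorial moment of a Poisson(`r`) variable is `rᵏ`,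
so the whole series equals `∑_k e_k = det (1 + L)`.
-/

open Matrix Finset Nat

open Function in
theorem Finset.filter_injective_image_eq_image_equiv {α ι : Type*} [Fintype α] [DecidableEq α]
    [Fintype ι] [DecidableEq ι] (S : Finset ι) :
    ({g : α → ι | Injective g ∧ univ.image g = S} : Finset (α → ι)) =
      univ.image fun e : α ≃ S => Subtype.val ∘ e := by
  ext g
  simp only [mem_filter, mem_univ, true_and, mem_image]
  constructor
  · rintro ⟨hg, rfl⟩
    exact ⟨(Equiv.ofInjective g hg).trans (Equiv.subtypeEquivRight fun x => by simp), rfl⟩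
  · rintro ⟨e, rfl⟩
    refine ⟨Subtype.val_injective.comp e.injective, Finset.ext fun x => ⟨?_, fun hx => ?_⟩⟩
    · rw [mem_image]
      rintro ⟨a, -, rfl⟩
      exact (e a).2
    · exact mem_image.2 ⟨e.symm ⟨x, hx⟩, mem_univ _, by simp⟩

theorem Finset.sum_range_succ_eq_sum_range_succ_of_eq_zero {M : Type*} [AddCommMonoid M]
    {f : ℕ → M} {m n : ℕ} (hm : ∀ k, m < k → f k = 0) (hn : ∀ k, n < k → f k = 0) :
    ∑ k ∈ range (m + 1), f k = ∑ k ∈ range (n + 1), f k := by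
  have hsupp : ∀ N, (∀ k, N < k → f k = 0) → Function.support f ⊆ range (N + 1) := fun N hN =>
    Function.support_subset_iff'.2 fun k hk => hN k (by simpa [Nat.lt_succ_iff] using hk)
  rw [← finsum_eq_sum_of_support_subset f (hsupp m hm),
    finsum_eq_sum_of_support_subset f (hsupp n hn)]

theorem Fintype.sum_prod_mul_comp_subtype_val {α ι R : Type*} [Fintype α] [DecidableEq α]
    [Fintype ι] [CommSemiring R] (P : α → Prop) [DecidablePred P] (w : ι → R)
    (hw : ∑ i, w i = 1) (f : ({a // P a} → ι) → R) :
    ∑ σ : α → ι, (∏ a, w (σ a)) * f (fun a => σ a) =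
      ∑ g : {a // P a} → ι, (∏ a, w (g a)) * f g := by
  rw [← (Equiv.piEquivPiSubtypeProd P fun _ => ι).symm.sum_comp, Fintype.sum_prod_type]
  refine Fintype.sum_congr _ _ fun g => ?_
  have hmass : ∑ h : {a // ¬ P a} → ι, ∏ a, w (h a) = 1 := by
    rw [← Fintype.prod_sum fun (_ : {a // ¬ P a}) i => w i, hw, prod_const_one]
  simp only [← Fintype.prod_subtype_mul_prod_subtype P, Equiv.piEquivPiSubtypeProd_symm_apply,
    Subtype.prop, fun a : {a // ¬ P a} => a.2, ↓reduceDIte, Subtype.coe_eta]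
  rw [← sum_mul, ← mul_sum, hmass, mul_one]

namespace Matrix

variable {ι R : Type*} [CommRing R]

theorem det_submatrix_eq_zero_of_not_injective {α : Type*} [Fintype α] [DecidableEq α]
    (M : Matrix ι ι R) {g : α → ι} (hg : ¬ Function.Injective g) :
    (M.submatrix g g).det = 0 := by
  obtain ⟨a, b, hab, hne⟩ := Function.not_injective_iff.mp hg
  exact det_zero_of_row_eq hne (funext fun j => by simp [hab])

variable [Fintype ι] [DecidableEq ι]

theorem det_one_add_eq_sum_det_submatrix (M : Matrix ι ι R) :
    (1 + M).det = ∑ s : Finset ι, (M.submatrix (Subtype.val : s → ι) Subtype.val).det := by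
  rw [add_comm]
  exact (detRowAlternating.map_add_univ M.row (1 : Matrix ι ι R).row).trans
    (sum_congr rfl fun s _ => det_piecewise_one_eq_submatrix_det M s)

def sumPrincipalMinors (M : Matrix ι ι R) (k : ℕ) : R :=
  ∑ S ∈ powersetCard k univ, (M.submatrix (Subtype.val : S → ι) Subtype.val).det

theorem det_one_add_eq_sum_sumPrincipalMinors (M : Matrix ι ι R) :
    (1 + M).det = ∑ k ∈ range (Fintype.card ι + 1), M.sumPrincipalMinors k := by
  rw [det_one_add_eq_sum_det_submatrix, ← sum_fiberwise_of_maps_to (g := Finset.card)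
    fun s _ => mem_range_succ_iff.2 (card_le_univ s)]
  simp only [sumPrincipalMinors, powersetCard_eq_filter, powerset_univ]

theorem sumPrincipalMinors_eq_zero_of_card_lt (M : Matrix ι ι R) {k : ℕ} (hk : Fintype.card ι < k) :
    M.sumPrincipalMinors k = 0 := by
  rw [sumPrincipalMinors, powersetCard_eq_empty.2 (by rwa [Finset.card_univ]), sum_empty]

open Function in
theorem sum_det_submatrix_eq_factorial_mul {α : Type*} [Fintype α] [DecidableEq α]
    (M : Matrix ι ι R) :
    ∑ g : α → ι, (M.submatrix g g).det =
      (Fintype.card α)! * M.sumPrincipalMinors (Fintype.card α) := by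
  have hmaps : ∀ g ∈ ({g : α → ι | Injective g} : Finset _),
      univ.image g ∈ powersetCard (Fintype.card α) univ := fun g hg =>
    mem_powersetCard.2 ⟨subset_univ _, by
      rw [card_image_of_injective _ (mem_filter.1 hg).2, Finset.card_univ]⟩
  rw [← sum_filter_of_ne fun g _ h => not_not.1 (mt (det_submatrix_eq_zero_of_not_injective M) h),
    ← sum_fiberwise_of_maps_to hmaps, sumPrincipalMinors, mul_sum]
  refine sum_congr rfl fun S hS => ?_
  have hcard : Fintype.card α = Fintype.card S := by
    rw [Fintype.card_coe, (mem_powersetCard.1 hS).2]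
  rw [filter_filter, filter_injective_image_eq_image_equiv,
    sum_image (g := fun e : α ≃ S => Subtype.val ∘ e) fun e _ e' _ h =>
      Equiv.ext fun a => Subtype.ext (congrFun h a)]
  simp only [← submatrix_submatrix, det_submatrix_equiv_self, sum_const, Finset.card_univ,
    Fintype.card_equiv (Fintype.equivOfCardEq hcard), nsmul_eq_mul]

theorem prod_mul_det_of_div_mul_sqrt {α : Type*} [Fintype α] [DecidableEq α]
    (N : Matrix α α ℝ) {w : α → ℝ} (hw : ∀ a, 0 < w a) {r : ℝ} (hr : 0 ≤ r) :
    (∏ a, w a) * (of fun a b => N a b / (r * √(w a * w b))).det =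
      r⁻¹ ^ Fintype.card α * N.det := by
  set d : α → ℝ := fun a => (√(r * w a))⁻¹
  have hN : (of fun a b => N a b / (r * √(w a * w b))) = diagonal d * N * diagonal d := by
    ext a b
    have : r * √(w a * w b) = √(r * w a) * √(r * w b) := by
      rw [← Real.sqrt_mul (mul_nonneg hr (hw a).le), mul_mul_mul_comm,
        Real.sqrt_mul (mul_self_nonneg r), Real.sqrt_mul_self hr]
    simp only [of_apply, mul_diagonal, diagonal_mul, d, this]
    field_simp
  have hwd : ∀ a, w a * (d a * d a) = r⁻¹ := fun a => by
    rw [← mul_inv, Real.mul_self_sqrt (mul_nonneg hr (hw a).le), mul_inv, ← mul_assoc,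
      mul_comm (w a), mul_assoc, mul_inv_cancel₀ (hw a).ne', mul_one]
  have hprod : ∏ a, w a * (d a * d a) = r⁻¹ ^ Fintype.card α := by simp [hwd]
  rw [hN, det_mul, det_mul, det_diagonal, ← hprod, prod_mul_distrib, prod_mul_distrib]
  ring

end Matrix

theorem hasSum_poisson_mul_descFactorial (r : ℝ) (k : ℕ) :
    HasSum (fun t : ℕ => Real.exp (-r) * r ^ t / t ! * t.descFactorial k) (r ^ k) := by
  rw [← hasSum_nat_add_iff' k, sum_eq_zero fun i hi => by
    rw [descFactorial_eq_zero_iff_lt.2 (mem_range.1 hi), cast_zero, mul_zero], sub_zero]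
  have hshift : ∀ t : ℕ,
      Real.exp (-r) * r ^ (t + k) / (t + k)! * ((t + k).descFactorial k : ℝ) =
        r ^ k * Real.exp (-r) * (r ^ t / t !) := fun t => by
    rw [← factorial_mul_descFactorial (Nat.le_add_left k t), Nat.add_sub_cancel, cast_mul]
    field_simp
    ring
  simp only [hshift]
  have := (NormedSpace.expSeries_div_hasSum_exp r).mul_left (r ^ k * Real.exp (-r))
  rwa [← Real.exp_eq_exp_ℝ, mul_assoc, ← Real.exp_add, neg_add_cancel, Real.exp_zero,
    mul_one] at this

theorem sum_prod_mul_det_one_add_of_div_mul_sqrt {α ι : Type*} [Fintype α] [DecidableEq α]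
    [Fintype ι] [DecidableEq ι] (L : Matrix ι ι ℝ) {p : ι → ℝ} (hp : ∀ i, 0 < p i)
    (hp1 : ∑ i, p i = 1) {r : ℝ} (hr : 0 ≤ r) :
    ∑ σ : α → ι, (∏ a, p (σ a)) *
        (1 + of fun a b => L (σ a) (σ b) / (r * √(p (σ a) * p (σ b)))).det =
      ∑ k ∈ range (Fintype.card ι + 1),
        (Fintype.card α).descFactorial k * (r⁻¹ ^ k * L.sumPrincipalMinors k) := by
  set A : Matrix ι ι ℝ := of fun i j => L i j / (r * √(p i * p j))
  calc _ = ∑ s : Finset α, ∑ σ : α → ι, (∏ a, p (σ a)) *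
        (A.submatrix (fun a : s => σ a) fun a : s => σ a).det := by
        simp only [det_one_add_eq_sum_det_submatrix, mul_sum]
        exact sum_comm
    _ = ∑ s : Finset α, ∑ g : s → ι, (∏ a, p (g a)) * (A.submatrix g g).det :=
        sum_congr rfl fun s _ => by
          -- `convert` only has to identify two `Fintype` instances on `↥s`
          convert Fintype.sum_prod_mul_comp_subtype_val (· ∈ s) p hp1 fun g =>
            (A.submatrix g g).det
    _ = ∑ s : Finset α, ∑ g : s → ι, r⁻¹ ^ Fintype.card s * (L.submatrix g g).det :=
        sum_congr rfl fun s _ => sum_congr rfl fun g _ =>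
          prod_mul_det_of_div_mul_sqrt (L.submatrix g g) (fun a => hp (g a)) hr
    _ = ∑ s : Finset α, r⁻¹ ^ #s * ((#s)! * L.sumPrincipalMinors #s) := by
        simp only [← mul_sum, sum_det_submatrix_eq_factorial_mul, Fintype.card_coe]
    _ = ∑ k ∈ range (Fintype.card α + 1),
          (Fintype.card α).descFactorial k * (r⁻¹ ^ k * L.sumPrincipalMinors k) := by
        rw [← powerset_univ,
          sum_powerset_apply_card fun k => r⁻¹ ^ k * (k ! * L.sumPrincipalMinors k),
          Finset.card_univ]
        refine sum_congr rfl fun k _ => ?_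
        rw [nsmul_eq_mul, descFactorial_eq_factorial_mul_choose, cast_mul]
        ring
    _ = _ := sum_range_succ_eq_sum_range_succ_of_eq_zero
        (fun k hk => by rw [descFactorial_eq_zero_iff_lt.2 hk, cast_zero, zero_mul])
        (fun k hk => by rw [sumPrincipalMinors_eq_zero_of_card_lt L hk, mul_zero, mul_zero])

theorem rdpp_normalization_general {n : ℕ} (L : Matrix (Fin n) (Fin n) ℝ)
    (p : Fin n → ℝ) (hp : ∀ i, 0 < p i) (hp1 : ∑ i, p i = 1) (r : ℝ) (hr : 0 < r) :
    ∑' t : ℕ, Real.exp (-r) * r ^ t / (t.factorial : ℝ) *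
      ∑ σ : Fin t → Fin n, (∏ a, p (σ a)) *
        (1 + Matrix.of fun a b : Fin t =>
          L (σ a) (σ b) / (r * Real.sqrt (p (σ a) * p (σ b)))).det
    = (1 + L).det := by
  refine HasSum.tsum_eq ?_
  simp only [sum_prod_mul_det_one_add_of_div_mul_sqrt L hp hp1 hr.le, Fintype.card_fin, mul_sum]
  rw [det_one_add_eq_sum_sumPrincipalMinors, Fintype.card_fin]
  refine hasSum_sum fun k _ => ?_
  have hk := (hasSum_poisson_mul_descFactorial r k).mul_right (r⁻¹ ^ k * L.sumPrincipalMinors k)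
  rw [← mul_assoc, ← mul_pow, mul_inv_cancel₀ hr.ne', one_pow, one_mul] at hk
  simpa only [mul_assoc] using hk

/-- (Normalization of the R-DPP.) For a psd `L`, a strictly positive
probability vector `p` and `r > 0`, with `Ã_{ij} = L_{ij} / (r √(p_i p_j))` and `Ã_σ` the
`t × t` matrix with entries `Ã_{σ_a σ_b}`,
`Σ_{t} (e^{-r} r^t / t!) Σ_{σ ∈ [n]^t} (Π_a p_{σ_a}) det (1 + Ã_σ) = det (1 + L)`,
i.e. if `t ∼ Poisson(r)` and `σ₁, …, σ_t` are i.i.d. from `p` then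
`E[det (1 + Ã_σ)] = det (1 + L)`. -/
theorem rdpp_normalization {n : ℕ} (L : Matrix (Fin n) (Fin n) ℝ) (hL : L.PosSemidef)
    (p : Fin n → ℝ) (hp : ∀ i, 0 < p i) (hp1 : ∑ i, p i = 1) (r : ℝ) (hr : 0 < r) :
    ∑' t : ℕ, Real.exp (-r) * r ^ t / (t.factorial : ℝ) *
      ∑ σ : Fin t → Fin n, (∏ a, p (σ a)) *
        (1 + Matrix.of fun a b : Fin t =>
          L (σ a) (σ b) / (r * Real.sqrt (p (σ a) * p (σ b)))).det
    = (1 + L).det :=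
  rdpp_normalization_general L p hp hp1 r hr
end

section
/- Let A and B be real symmetric positive semidefinite n×n matrices with A ⪯ B in the Loewner order. Then tr( A (I + A)⁻¹ ) ≤ tr( B (I + B)⁻¹ ). In particular, for any Nyström approximation L̂ of a psd matrix L one has tr(L̂(I + L̂)⁻¹) ≤ tr(L(I + L)⁻¹), i.e. the approximate effective dimension never exceeds the true one. -/
/-!
Since `A (1 + A)⁻¹ = 1 - (1 + A)⁻¹`, the claim is `tr (1 + B)⁻¹ ≤ tr (1 + A)⁻¹`, which follows
from the antitonicity of inversion in the Loewner order. For the latter, the block matrix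
`fromBlocks Q 1 1 P⁻¹` has Schur complements `Q - P` and `P⁻¹ - Q⁻¹`, so one is psd iff the
other is.
-/

open Matrix

namespace Matrix

variable {n : Type*} [Fintype n] [DecidableEq n]

theorem PosDef.inv_sub_inv_posSemidef {K : Type*} [Field K] [PartialOrder K] [StarRing K]
    [StarOrderedRing K] {P Q : Matrix n n K} (hP : P.PosDef) (hPQ : (Q - P).PosSemidef) :
    (P⁻¹ - Q⁻¹).PosSemidef := by
  have hQ : Q.PosDef := by simpa using hP.add_posSemidef hPQ
  let := hP.isUnit.invertible
  let := hQ.isUnit.invertible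
  let := hP.inv.isUnit.invertible
  have hblock : (fromBlocks Q 1 (1 : Matrix n n K)ᴴ P⁻¹).PosSemidef := by
    rwa [PosDef.fromBlocks₂₂ _ _ hP.inv, conjTranspose_one, Matrix.mul_one, Matrix.one_mul,
      inv_inv_of_invertible]
  simpa using (PosDef.fromBlocks₁₁ _ _ hQ).mp hblock

theorem mul_inv_one_add_eq_one_sub_inv {R : Type*} [CommRing R] {A : Matrix n n R}
    (h : IsUnit (1 + A)) : A * (1 + A)⁻¹ = 1 - (1 + A)⁻¹ :=
  calc A * (1 + A)⁻¹ = (1 + A - 1) * (1 + A)⁻¹ := by rw [add_sub_cancel_left]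
    _ = 1 - (1 + A)⁻¹ := by
      rw [sub_mul, mul_nonsing_inv _ ((isUnit_iff_isUnit_det _).mp h), Matrix.one_mul]

end Matrix

theorem effective_dimension_monotone_general {n : ℕ} (A B : Matrix (Fin n) (Fin n) ℝ)
    (hA : A.PosSemidef) (hAB : (B - A).PosSemidef) :
    (A * (1 + A)⁻¹).trace ≤ (B * (1 + B)⁻¹).trace := by
  have hA₁ : (1 + A).PosDef := PosDef.one.add_posSemidef hA
  have hB₁ : (1 + B).PosDef := by simpa using hA₁.add_posSemidef hAB
  have hinv : ((1 + A)⁻¹ - (1 + B)⁻¹).PosSemidef :=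
    hA₁.inv_sub_inv_posSemidef (by rwa [add_sub_add_left_eq_sub])
  have htrace := hinv.trace_nonneg
  rw [trace_sub] at htrace
  rw [mul_inv_one_add_eq_one_sub_inv hA₁.isUnit, mul_inv_one_add_eq_one_sub_inv hB₁.isUnit,
    trace_sub, trace_sub]
  linarith

/-- If `A ⪯ B` are real symmetric psd matrices (Loewner order), then
`tr (A (1 + A)⁻¹) ≤ tr (B (1 + B)⁻¹)`: the effective dimension is monotone, so any
Nyström approximation `L̂ ⪯ L` has `tr (L̂ (1 + L̂)⁻¹) ≤ tr (L (1 + L)⁻¹)`. -/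
theorem effective_dimension_monotone {n : ℕ} (A B : Matrix (Fin n) (Fin n) ℝ)
    (hA : A.PosSemidef) (hB : B.PosSemidef) (hAB : (B - A).PosSemidef) :
    (A * (1 + A)⁻¹).trace ≤ (B * (1 + B)⁻¹).trace :=
  effective_dimension_monotone_general A B hA hAB
end

section
/- Let L = B Bᵀ be a real psd n×n matrix, let k = tr(L(I + L)⁻¹) ≥ 1, and set ε = 1/(2k + 2). Let P be a real symmetric idempotent matrix such that (1 − ε)(BᵀB + I) ⪯ P BᵀB P + I ⪯ (1 + ε)(BᵀB + I) in the Loewner order, and set L̂ = B P Bᵀ. Then tr( L(I + L)⁻¹ L − L̂ (I + L)⁻¹ L̂ ) ≤ 1, i.e. L̂ satisfies the accuracy condition of the fast-acceptance theorem for DPP-VFX. -/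
open Matrix

/-!
Write `Q = 1 - P` and `D = B Q Bᵀ`, so that `L̂ = L - D`. Conjugating the lower sandwich by `Q`
kills `P BᵀB P` and leaves `Q BᵀB Q ⪯ ε / (1 - ε)`; since `(BQ)ᵀ(BQ)` and `(BQ)(BQ)ᵀ` have the same
operator norm, also `D ⪯ ε / (1 - ε)`. With `G = (1 + L)⁻¹`, which commutes with `L`,
`tr (L G L - L̂ G L̂) = 2 tr (L G D) - tr (D G D) ≤ 2 ε / (1 - ε) · tr (L G) = 2k / (2k + 1) ≤ 1`.
-/

namespace Matrix

variable {ι κ : Type*} [Fintype ι] [Fintype κ]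

theorem commute_inv_of_commute [DecidableEq ι] {R : Type*} [CommRing R] {A B : Matrix ι ι R}
    (h : Commute A B) : Commute A B⁻¹ := by
  rw [nonsing_inv_eq_ringInverse]
  by_cases hB : IsUnit B
  · rw [← hB.unit_spec, Ring.inverse_unit]
    exact h.units_inv_right
  · rw [Ring.inverse_non_unit _ hB]
    exact Commute.zero_right A

theorem PosSemidef.trace_mul_nonneg [DecidableEq ι] {A C : Matrix ι ι ℝ}
    (hA : A.PosSemidef) (hC : C.PosSemidef) : 0 ≤ (C * A).trace := by
  open scoped MatrixOrder in
  obtain ⟨S, rfl⟩ := CStarAlgebra.nonneg_iff_eq_star_mul_self.mp hC.nonneg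
  rw [star_eq_conjTranspose, Matrix.mul_assoc, trace_mul_comm]
  exact (hA.mul_mul_conjTranspose_same S).trace_nonneg

theorem PosSemidef.mul_inv_one_add [DecidableEq ι] {L : Matrix ι ι ℝ} (hL : L.PosSemidef) :
    (L * (1 + L)⁻¹).PosSemidef := by
  have hG : (1 + L)⁻¹.PosSemidef := (PosSemidef.one.add hL).inv
  have hGL : (1 + L)⁻¹ * (1 + L) = 1 :=
    nonsing_inv_mul _ ((isUnit_iff_isUnit_det _).1 (PosDef.one.add_posSemidef hL).isUnit)
  have hL2 : (L + Lᴴ * L).PosSemidef := hL.add (posSemidef_conjTranspose_mul_self L)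
  convert hL2.mul_mul_conjTranspose_same (1 + L)⁻¹ using 1
  rw [hG.isHermitian.eq, hL.isHermitian.eq]
  calc L * (1 + L)⁻¹ = (1 + L)⁻¹ * (1 + L) * L * (1 + L)⁻¹ := by rw [hGL, Matrix.one_mul]
    _ = _ := by noncomm_ring

theorem trace_sub_le_of_posSemidef_smul_one_sub [DecidableEq ι] {L D : Matrix ι ι ℝ}
    (hL : L.PosSemidef) (hD : Dᵀ = D) {α : ℝ} (hDα : (α • 1 - D).PosSemidef) :
    (L * (1 + L)⁻¹ * L - (L - D) * (1 + L)⁻¹ * (L - D)).trace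
      ≤ 2 * α * (L * (1 + L)⁻¹).trace := by
  set G := (1 + L)⁻¹
  have hGL : G * L = L * G :=
    (commute_inv_of_commute ((Commute.one_right L).add_right (Commute.refl L))).eq.symm
  have hcross : (D * G * L).trace = (L * G * D).trace := by
    rw [Matrix.mul_assoc, trace_mul_comm, hGL]
  have hDGD : 0 ≤ (D * G * D).trace := by
    have := ((PosSemidef.one.add hL).inv.conjTranspose_mul_mul_same D).trace_nonneg
    rwa [conjTranspose_eq_transpose_of_trivial, hD] at this
  have hLGD : (L * G * D).trace ≤ α * (L * G).trace := by
    have := hDα.trace_mul_nonneg hL.mul_inv_one_add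
    rwa [Matrix.mul_sub, trace_sub, Matrix.mul_smul, Matrix.mul_one, trace_smul, smul_eq_mul,
      sub_nonneg] at this
  have hexpand : L * G * L - (L - D) * G * (L - D) = D * G * L + L * G * D - D * G * D := by
    noncomm_ring
  rw [hexpand, trace_sub, trace_add, hcross]
  linarith

theorem posSemidef_smul_one_sub_transpose_mul_iff [DecidableEq κ] {A : Matrix ι κ ℝ} {c : ℝ} :
    (c • 1 - Aᵀ * A).PosSemidef ↔ ∀ x, A *ᵥ x ⬝ᵥ A *ᵥ x ≤ c * (x ⬝ᵥ x) := by
  have hsymm : (c • 1 - Aᵀ * A).IsHermitian := by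
    simp [IsHermitian, conjTranspose_eq_transpose_of_trivial, transpose_mul]
  simp only [posSemidef_iff_dotProduct_mulVec, hsymm, true_and, star_trivial, sub_mulVec,
    smul_mulVec, one_mulVec, ← mulVec_mulVec, dotProduct_sub, dotProduct_smul, smul_eq_mul,
    dotProduct_mulVec _ Aᵀ, vecMul_transpose, sub_nonneg]

theorem posSemidef_smul_one_sub_mul_transpose [DecidableEq ι] [DecidableEq κ]
    {A : Matrix ι κ ℝ} {c : ℝ} (hc : 0 ≤ c) (h : (c • 1 - Aᵀ * A).PosSemidef) :
    (c • 1 - A * Aᵀ).PosSemidef := by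
  rw [posSemidef_smul_one_sub_transpose_mul_iff] at h
  simpa only [transpose_transpose] using
    posSemidef_smul_one_sub_transpose_mul_iff (A := Aᵀ).2 fun y ↦ by
      set x := Aᵀ *ᵥ y
      have hx : x ⬝ᵥ x = y ⬝ᵥ A *ᵥ x := by
        rw [dotProduct_mulVec, vecMul_transpose, dotProduct_comm]
      have hcs : (y ⬝ᵥ A *ᵥ x) ^ 2 ≤ (y ⬝ᵥ y) * (A *ᵥ x ⬝ᵥ A *ᵥ x) := by
        simpa only [dotProduct, pow_two] using
          Finset.sum_mul_sq_le_sq_mul_sq Finset.univ y (A *ᵥ x)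
      have hy0 : 0 ≤ y ⬝ᵥ y := by simpa using dotProduct_self_star_nonneg y
      have hsq : (x ⬝ᵥ x) ^ 2 ≤ (c * (y ⬝ᵥ y)) * (x ⬝ᵥ x) :=
        calc (x ⬝ᵥ x) ^ 2 ≤ (y ⬝ᵥ y) * (A *ᵥ x ⬝ᵥ A *ᵥ x) := hx ▸ hcs
          _ ≤ (y ⬝ᵥ y) * (c * (x ⬝ᵥ x)) := mul_le_mul_of_nonneg_left (h x) hy0
          _ = (c * (y ⬝ᵥ y)) * (x ⬝ᵥ x) := by ring
      nlinarith [mul_nonneg hc hy0]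

theorem posSemidef_smul_one_sub_compl_mul_mul_compl [DecidableEq ι] {P N : Matrix ι ι ℝ}
    (hPsym : Pᵀ = P) (hPidem : IsIdempotentElem P) {ε : ℝ} (hε0 : 0 ≤ ε) (hε1 : ε < 1)
    (h : ((P * N * P + 1) - (1 - ε) • (N + 1)).PosSemidef) :
    ((ε / (1 - ε)) • 1 - (1 - P) * N * (1 - P)).PosSemidef := by
  have hconj : (1 - P)ᴴ * ((P * N * P + 1) - (1 - ε) • (N + 1)) * (1 - P)
      = ε • (1 - P) - (1 - ε) • ((1 - P) * N * (1 - P)) := by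
    rw [conjTranspose_eq_transpose_of_trivial, transpose_sub, transpose_one, hPsym]
    have hQP := hPidem.one_sub_mul_self
    have hQQ := hPidem.one_sub.eq
    generalize 1 - P = Q at *
    simp only [Matrix.mul_add, Matrix.add_mul, Matrix.mul_sub, Matrix.sub_mul, Matrix.mul_smul,
      Matrix.smul_mul, Matrix.mul_one, ← Matrix.mul_assoc, hQP, Matrix.zero_mul, hQQ]
    module
  have hP : P.PosSemidef := by
    simpa only [conjTranspose_eq_transpose_of_trivial, hPsym, hPidem.eq] using
      posSemidef_conjTranspose_mul_self P
  have hsum := ((h.conjTranspose_mul_mul_same (1 - P)).smul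
    (inv_nonneg.2 (sub_nonneg.2 hε1.le))).add (hP.smul (div_nonneg hε0 (sub_nonneg.2 hε1.le)))
  convert hsum using 1
  rw [hconj, smul_sub, smul_smul, smul_smul, inv_mul_cancel₀ (sub_ne_zero.2 hε1.ne'), one_smul]
  module

theorem posSemidef_smul_one_sub_mul_compl_mul_transpose [DecidableEq ι] [DecidableEq κ]
    {B : Matrix ι κ ℝ} {P : Matrix κ κ ℝ} (hPsym : Pᵀ = P) (hPidem : IsIdempotentElem P)
    {ε : ℝ} (hε0 : 0 ≤ ε) (hε1 : ε < 1)
    (h : ((P * Bᵀ * B * P + 1) - (1 - ε) • (Bᵀ * B + 1)).PosSemidef) :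
    ((ε / (1 - ε)) • 1 - B * (1 - P) * Bᵀ).PosSemidef := by
  have hQ : (1 - P)ᵀ = 1 - P := by rw [transpose_sub, transpose_one, hPsym]
  have hBQ : ((ε / (1 - ε)) • 1 - (B * (1 - P))ᵀ * (B * (1 - P))).PosSemidef := by
    rw [transpose_mul, hQ, ← Matrix.mul_assoc, Matrix.mul_assoc (1 - P) Bᵀ B]
    rw [Matrix.mul_assoc P Bᵀ B] at h
    exact posSemidef_smul_one_sub_compl_mul_mul_compl hPsym hPidem hε0 hε1 h
  have := posSemidef_smul_one_sub_mul_transpose (div_nonneg hε0 (sub_nonneg.2 hε1.le)) hBQ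
  rwa [transpose_mul, hQ, Matrix.mul_assoc, ← Matrix.mul_assoc (1 - P), hPidem.one_sub.eq,
    ← Matrix.mul_assoc] at this

end Matrix

theorem nystrom_accuracy_condition_general {n r : ℕ} (B : Matrix (Fin n) (Fin r) ℝ)
    (L : Matrix (Fin n) (Fin n) ℝ) (hL : L = B * Bᵀ)
    (k : ℝ) (hk : k = (L * (1 + L)⁻¹).trace)
    (ε : ℝ) (hε : ε = 1 / (2 * k + 2))
    (P : Matrix (Fin r) (Fin r) ℝ) (hPsym : Pᵀ = P) (hPidem : P * P = P)
    (hlow : ((P * Bᵀ * B * P + 1) - (1 - ε) • (Bᵀ * B + 1)).PosSemidef)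
    (Lhat : Matrix (Fin n) (Fin n) ℝ) (hLhat : Lhat = B * P * Bᵀ) :
    (L * (1 + L)⁻¹ * L - Lhat * (1 + L)⁻¹ * Lhat).trace ≤ 1 := by
  have hLpsd : L.PosSemidef := by
    simpa only [hL, conjTranspose_eq_transpose_of_trivial] using
      posSemidef_self_mul_conjTranspose B
  have hk0 : 0 ≤ k := hk ▸ hLpsd.mul_inv_one_add.trace_nonneg
  have hε0 : 0 ≤ ε := by rw [hε]; positivity
  have hε1 : ε < 1 := by rw [hε, div_lt_one (by linarith)]; linarith
  have hεk : ε * (2 * k + 2) = 1 := by rw [hε]; field_simp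
  have hD := posSemidef_smul_one_sub_mul_compl_mul_transpose hPsym hPidem hε0 hε1 hlow
  have hDsym : (B * (1 - P) * Bᵀ)ᵀ = B * (1 - P) * Bᵀ := by
    rw [transpose_mul, transpose_mul, transpose_transpose, transpose_sub, transpose_one, hPsym,
      Matrix.mul_assoc]
  have hLhat' : Lhat = L - B * (1 - P) * Bᵀ := by
    rw [hLhat, hL, Matrix.mul_sub, Matrix.mul_one, Matrix.sub_mul, sub_sub_cancel]
  calc (L * (1 + L)⁻¹ * L - Lhat * (1 + L)⁻¹ * Lhat).trace
      ≤ 2 * (ε / (1 - ε)) * k := by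
        rw [hLhat', hk]; exact trace_sub_le_of_posSemidef_smul_one_sub hLpsd hDsym hD
    _ ≤ 1 := by
        rw [show 2 * (ε / (1 - ε)) * k = 2 * ε * k / (1 - ε) by ring, div_le_one (by linarith)]
        linarith

/-- Let `L = B Bᵀ` with effective dimension `k = tr (L (1 + L)⁻¹) ≥ 1`,
set `ε = 1/(2k+2)`, and let `P` be a symmetric idempotent matrix satisfying the spectral
sandwich `(1-ε)(BᵀB + 1) ⪯ P BᵀB P + 1 ⪯ (1+ε)(BᵀB + 1)` (Loewner order). Then
`L̂ = B P Bᵀ` satisfies the accuracy condition `tr (L (1+L)⁻¹ L - L̂ (1+L)⁻¹ L̂) ≤ 1`. -/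
theorem nystrom_accuracy_condition {n r : ℕ} (B : Matrix (Fin n) (Fin r) ℝ)
    (L : Matrix (Fin n) (Fin n) ℝ) (hL : L = B * Bᵀ)
    (k : ℝ) (hk : k = (L * (1 + L)⁻¹).trace) (hk1 : 1 ≤ k)
    (ε : ℝ) (hε : ε = 1 / (2 * k + 2))
    (P : Matrix (Fin r) (Fin r) ℝ) (hPsym : Pᵀ = P) (hPidem : P * P = P)
    (hlow : ((P * Bᵀ * B * P + 1) - (1 - ε) • (Bᵀ * B + 1)).PosSemidef)
    (hhigh : ((1 + ε) • (Bᵀ * B + 1) - (P * Bᵀ * B * P + 1)).PosSemidef)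
    (Lhat : Matrix (Fin n) (Fin n) ℝ) (hLhat : Lhat = B * P * Bᵀ) :
    (L * (1 + L)⁻¹ * L - Lhat * (1 + L)⁻¹ * Lhat).trace ≤ 1 :=
  nystrom_accuracy_condition_general B L hL k hk ε hε P hPsym hPidem hlow Lhat hLhat
end

section
/- Let λ₁,…,λ_n be strictly positive real numbers and let k ∈ {0,1,…,n}. Then there exists α > 0 such that α^k e_k(λ) ≥ α^i e_i(λ) for all i ∈ {0,1,…,n}, where e_i denotes the i-th elementary symmetric polynomial (with e_0 = 1). In other words, for every target size k there is a rescaling α of the kernel L (with eigenvalues λ₁,…,λ_n) making k a mode of the subset-size distribution of DPP(αL), whose probabilities satisfy Pr(|S_α| = i) ∝ α^i e_i(λ). -/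
/-!
The sequence `e_i = e_i(λ)` is log-concave in the form `e_i e_{j+1} ≤ e_{i+1} e_j` for `i ≤ j`,
which follows by induction on the number of variables from `e_{i+1}(a, λ) = e_{i+1}(λ) + a e_i(λ)`.
So the ratios `e_i / e_{i+1}` increase with `i`, and any `α` between `e_{k-1} / e_k` and
`e_k / e_{k+1}` makes `i ↦ α^i e_i` increase up to `k` and decrease after it.
-/

open Finset

namespace Multiset

section CommSemiring
variable {R : Type*} [CommSemiring R]

@[simp]
theorem esymm_zero_right (s : Multiset R) : s.esymm 0 = 1 := by simp [esymm]

@[simp]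
theorem zero_esymm_succ (i : ℕ) : (0 : Multiset R).esymm (i + 1) = 0 := by
  simp [esymm, powersetCard_zero_right]

theorem esymm_cons_succ (a : R) (s : Multiset R) (i : ℕ) :
    (a ::ₘ s).esymm (i + 1) = s.esymm (i + 1) + a * s.esymm i := by
  simp only [esymm, powersetCard_cons, map_add, sum_add, map_map, Function.comp_def, prod_cons,
    sum_map_mul_left]

end CommSemiring

theorem esymm_nonneg {R : Type*} [CommSemiring R] [PartialOrder R] [IsOrderedRing R]
    {s : Multiset R} (hs : ∀ x ∈ s, 0 ≤ x) (i : ℕ) : 0 ≤ s.esymm i :=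
  sum_nonneg fun _ hp ↦ by
    obtain ⟨t, ht, rfl⟩ := mem_map.1 hp
    exact prod_nonneg fun x hx ↦ hs x (mem_of_le (mem_powersetCard.1 ht).1 hx)

theorem esymm_pos {R : Type*} [CommSemiring R] [PartialOrder R] [IsStrictOrderedRing R]
    {s : Multiset R} (hs : ∀ x ∈ s, 0 < x) {i : ℕ} (hi : i ≤ card s) : 0 < s.esymm i := by
  induction s using Multiset.induction_on generalizing i with
  | empty => simp_all
  | cons a s ih =>
    obtain _ | i := i
    · simp
    have hs' : ∀ x ∈ s, 0 < x := fun x hx ↦ hs x (mem_cons_of_mem hx)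
    rw [esymm_cons_succ]
    exact add_pos_of_nonneg_of_pos (esymm_nonneg (fun x hx ↦ (hs' x hx).le) _)
      (mul_pos (hs a (mem_cons_self a s)) (ih hs' (by simpa using hi)))

theorem esymm_mul_esymm_succ_le {R : Type*} [CommRing R] [LinearOrder R] [IsStrictOrderedRing R]
    {s : Multiset R} (hs : ∀ x ∈ s, 0 ≤ x) {i j : ℕ} (hij : i ≤ j) :
    s.esymm i * s.esymm (j + 1) ≤ s.esymm (i + 1) * s.esymm j := by
  induction s using Multiset.induction_on generalizing i j with
  | empty => cases i <;> simp
  | cons a s ih =>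
    have ha : 0 ≤ a := hs a (mem_cons_self a s)
    have hs' : ∀ x ∈ s, 0 ≤ x := fun x hx ↦ hs x (mem_cons_of_mem hx)
    replace ih : ∀ {i j : ℕ}, i ≤ j → s.esymm i * s.esymm (j + 1) ≤ s.esymm (i + 1) * s.esymm j :=
      ih hs'
    have he := esymm_nonneg hs'
    obtain _ | i := i
    · obtain _ | j := j
      · rw [mul_comm]
      have h := ih (Nat.zero_le (j + 1))
      simp only [esymm_zero_right, one_mul, zero_add, mul_one, esymm_cons_succ] at h ⊢
      nlinarith [mul_nonneg (mul_nonneg ha (he 1)) (he j), mul_nonneg (mul_nonneg ha ha) (he j)]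
    obtain ⟨j, rfl⟩ : ∃ j', j = j' + 1 := ⟨j - 1, by omega⟩
    have outer : s.esymm i * s.esymm (j + 2) ≤ s.esymm (i + 2) * s.esymm j := by
      rcases (Nat.le_of_succ_le_succ hij).eq_or_lt with rfl | hlt
      · rw [mul_comm]
      · exact (ih (by omega)).trans (ih hlt)
    simp only [esymm_cons_succ]
    nlinarith [ih hij, mul_le_mul_of_nonneg_left outer ha,
      mul_le_mul_of_nonneg_left (ih (Nat.le_of_succ_le_succ hij)) (mul_nonneg ha ha)]

end Multiset

theorem le_apply_of_le_add_one_of_add_one_le {α : Type*} [Preorder α] {f : ℕ → α} {k : ℕ}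
    (hup : ∀ i < k, f i ≤ f (i + 1)) (hdown : ∀ i, k ≤ i → f (i + 1) ≤ f i) (i : ℕ) :
    f i ≤ f k := by
  rcases le_total i k with hik | hki
  · exact monotoneOn_of_le_add_one Set.ordConnected_Iic
      (fun j _ _ hj ↦ hup j (Nat.lt_of_succ_le hj)) (Set.mem_Iic.2 hik) Set.self_mem_Iic hik
  · exact Nat.rel_of_forall_rel_succ_of_le_of_le (· ≥ ·) hdown le_rfl hki

section OrderedField
variable {R : Type*} [Field R] [LinearOrder R] [IsStrictOrderedRing R] {c : ℕ → R}

theorem pow_mul_le_pow_mul_of_ratio_bounds {α : R} (hα : 0 ≤ α) {k : ℕ}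
    (hup : ∀ i < k, c i ≤ α * c (i + 1)) (hdown : ∀ i, k ≤ i → α * c (i + 1) ≤ c i) (i : ℕ) :
    α ^ i * c i ≤ α ^ k * c k := by
  refine le_apply_of_le_add_one_of_add_one_le (f := fun i ↦ α ^ i * c i) (fun i hi ↦ ?_)
    (fun i hi ↦ ?_) i
  · simpa only [pow_succ, mul_assoc] using mul_le_mul_of_nonneg_left (hup i hi) (pow_nonneg hα i)
  · simpa only [pow_succ, mul_assoc] using
      mul_le_mul_of_nonneg_left (hdown i hi) (pow_nonneg hα i)

theorem exists_pos_forall_pow_mul_le_pow_mul (hc : ∀ i, 0 ≤ c i)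
    (hlc : ∀ i j, i ≤ j → c i * c (j + 1) ≤ c (i + 1) * c j) {k : ℕ} (hk : ∀ i ≤ k, 0 < c i) :
    ∃ α : R, 0 < α ∧ ∀ i, α ^ i * c i ≤ α ^ k * c k := by
  obtain _ | k := k
  · -- `c 0 / c 1` would do, but `c 1` may vanish.
    have h0 := hk 0 le_rfl
    have hsum : 0 < c 0 + c 1 := add_pos_of_pos_of_nonneg h0 (hc 1)
    refine ⟨c 0 / (c 0 + c 1), div_pos h0 hsum,
      pow_mul_le_pow_mul_of_ratio_bounds (div_pos h0 hsum).le (by simp) fun i _ ↦ ?_⟩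
    rw [div_mul_eq_mul_div, div_le_iff₀ hsum]
    nlinarith [hlc 0 i (Nat.zero_le i), mul_nonneg (hc i) h0.le]
  · have hck := hk (k + 1) le_rfl
    have hα : 0 < c k / c (k + 1) := div_pos (hk k k.le_succ) hck
    refine ⟨c k / c (k + 1), hα,
      pow_mul_le_pow_mul_of_ratio_bounds hα.le (fun i hi ↦ ?_) fun i hi ↦ ?_⟩
    · rw [div_mul_eq_mul_div, le_div_iff₀ hck, mul_comm (c k)]
      exact hlc i k (Nat.le_of_lt_succ hi)
    · rw [div_mul_eq_mul_div, div_le_iff₀ hck, mul_comm (c i)]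
      exact hlc k i (Nat.le_of_succ_le hi)

end OrderedField

/-- For strictly positive reals `λ₁, …, λ_n` and any `k ∈ {0, …, n}`
there is a rescaling `α > 0` such that `α^k e_k(λ) ≥ α^i e_i(λ)` for all `i ∈ {0, …, n}`,
where `e_i` is the `i`-th elementary symmetric polynomial: every target size `k` can be
made a mode of the subset-size distribution of `DPP(αL)`. -/
theorem exists_rescaling_mode {n : ℕ} (lam : Fin n → ℝ) (hlam : ∀ j, 0 < lam j)
    (k : ℕ) (hk : k ≤ n) :
    ∃ α : ℝ, 0 < α ∧ ∀ i ≤ n,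
      α ^ i * ∑ S ∈ Finset.univ.powersetCard i, ∏ j ∈ S, lam j
        ≤ α ^ k * ∑ S ∈ Finset.univ.powersetCard k, ∏ j ∈ S, lam j := by
  set s : Multiset ℝ := univ.val.map lam
  have hs : ∀ x ∈ s, 0 < x := by simpa [s] using hlam
  have hs₀ : ∀ x ∈ s, 0 ≤ x := fun x hx ↦ (hs x hx).le
  obtain ⟨α, hα, hmode⟩ := exists_pos_forall_pow_mul_le_pow_mul (k := k)
    (Multiset.esymm_nonneg hs₀) (fun _ _ ↦ Multiset.esymm_mul_esymm_succ_le hs₀)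
    fun i hi ↦ Multiset.esymm_pos hs (by simpa [s] using hi.trans hk)
  refine ⟨α, hα, fun i _ ↦ ?_⟩
  simpa only [s, Finset.esymm_map_val] using hmode i
end
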